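/- Let m and n be integers with 1 ≤ n ≤ m and let q > 0 with q ≠ 1. Writing circ_m for the circ statistic computed on the board S_{m+1} and circ_{m−1} for the circ statistic computed on the board S_m, one has Σ_{C ∈ C_n(S_{m+1})} q^{circ_m(C)} = Σ_{C ∈ C_n(S_m)} q^{circ_{m−1}(C)} + [m−n+1]_q · Σ_{C ∈ C_{n−1}(S_m)} q^{circ_{m−1}(C)}. -/
import Mathlib


noncomputable section

/-- The `q`-analogue `[k]_q = (1 - q^k)/(1 - q)` of a natural number `k`. -/
def qAnalogue (q : ℝ) (k : ℕ) : ℝ := (1 - q ^ k) / (1 - q)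

/-- The staircase Ferrers board `S_{m+1}`: cells `(c, r)` with `c + r ≤ m - 1`
(equivalently `c + r < m`). Thus `board m` is `S_{m+1}` and `board (m-1)` is `S_m`. -/
def board (m : ℕ) : Finset (ℕ × ℕ) :=
  (Finset.range m ×ˢ Finset.range m).filter (fun p => p.1 + p.2 < m)

/-- `C_n(S_{m+1})`: configurations of `n` non-attacking rooks on the staircase board
`S_{m+1}`. -/
def configs (m n : ℕ) : Finset (Finset (ℕ × ℕ)) :=
  ((board m).powersetCard n).filter
    (fun C => (∀ p ∈ C, ∀ p' ∈ C, p.1 = p'.1 → p = p') ∧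
      ∀ p ∈ C, ∀ p' ∈ C, p.2 = p'.2 → p = p')

/-- The statistic `circ(C)` computed on the board `S_{m+1}`. -/
def circ (m : ℕ) (C : Finset (ℕ × ℕ)) : ℕ :=
  ((board m).filter (fun p =>
    (∃ p₀ ∈ C, p₀.2 = p.2 ∧ p₀.1 < p.1) ∧ ¬∃ p₀ ∈ C, p₀.1 = p.1 ∧ p.2 < p₀.2)).card

open Finset

lemma mem_board {m : ℕ} {p : ℕ × ℕ} : p ∈ board m ↔ p.1 + p.2 < m := by
  simp only [board, Finset.mem_filter, Finset.mem_product, Finset.mem_range]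
  omega

lemma mem_configs {m n : ℕ} {C : Finset (ℕ × ℕ)} :
    C ∈ configs m n ↔ C ⊆ board m ∧ C.card = n ∧
      (∀ p ∈ C, ∀ p' ∈ C, p.1 = p'.1 → p = p') ∧
      (∀ p ∈ C, ∀ p' ∈ C, p.2 = p'.2 → p = p') := by
  simp only [configs, Finset.mem_filter, Finset.mem_powersetCard]
  tauto

def shf (C : Finset (ℕ × ℕ)) : Finset (ℕ × ℕ) := C.image (fun p => (p.1 + 1, p.2))
def unshf (C : Finset (ℕ × ℕ)) : Finset (ℕ × ℕ) := C.image (fun p => (p.1 - 1, p.2))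

lemma shf_map_inj : Function.Injective (fun p : ℕ × ℕ => (p.1 + 1, p.2)) := by
  rintro ⟨a, b⟩ ⟨c, d⟩ h
  simp only [Prod.mk.injEq] at h ⊢
  omega

lemma mem_shf {C : Finset (ℕ × ℕ)} {p : ℕ × ℕ} :
    p ∈ shf C ↔ ∃ c ρ, (c, ρ) ∈ C ∧ p = (c + 1, ρ) := by
  simp only [shf, Finset.mem_image]
  constructor
  · rintro ⟨⟨c, ρ⟩, h, rfl⟩
    exact ⟨c, ρ, h, rfl⟩
  · rintro ⟨c, ρ, h, rfl⟩
    exact ⟨(c, ρ), h, rfl⟩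

lemma unshf_shf (C : Finset (ℕ × ℕ)) : unshf (shf C) = C := by
  unfold shf unshf
  rw [Finset.image_image]
  have : ((fun p : ℕ × ℕ => (p.1 - 1, p.2)) ∘ fun p => (p.1 + 1, p.2)) = id := by
    funext p; simp
  rw [this, Finset.image_id]

lemma shf_unshf {C : Finset (ℕ × ℕ)} (h : ∀ p ∈ C, 1 ≤ p.1) : shf (unshf C) = C := by
  ext ⟨a, b⟩
  rw [mem_shf]
  constructor
  · rintro ⟨c, ρ, hc, hEq⟩
    simp only [unshf, Finset.mem_image] at hc
    obtain ⟨⟨x, y⟩, hxy, hEq2⟩ := hc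
    have hx := h _ hxy
    simp only [Prod.mk.injEq] at hEq hEq2 hx
    obtain ⟨rfl, rfl⟩ := hEq
    have : x = c + 1 := by omega
    subst this
    simpa [hEq2.2] using hxy
  · intro hab
    have ha := h _ hab
    simp only at ha
    refine ⟨a - 1, b, ?_, ?_⟩
    · simp only [unshf, Finset.mem_image]
      exact ⟨(a, b), hab, rfl⟩
    · simp only [Prod.mk.injEq, and_true]
      omega

lemma card_shf (C : Finset (ℕ × ℕ)) : (shf C).card = C.card :=
  Finset.card_image_of_injective _ shf_map_inj

lemma card_unshf {C : Finset (ℕ × ℕ)} (h : ∀ p ∈ C, 1 ≤ p.1) : (unshf C).card = C.card := by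
  apply Finset.card_image_of_injOn
  rintro ⟨a, b⟩ ha ⟨c, d⟩ hc hEq
  have := h _ ha; have := h _ hc
  simp only [Prod.mk.injEq] at hEq ⊢
  simp only at *
  omega

lemma circ_shf {m : ℕ} (hm : 1 ≤ m) {C : Finset (ℕ × ℕ)} (hC : C ⊆ board (m - 1)) :
    circ m (shf C) = circ (m - 1) C := by
  have hset : (board m).filter (fun p =>
        (∃ p₀ ∈ shf C, p₀.2 = p.2 ∧ p₀.1 < p.1) ∧ ¬∃ p₀ ∈ shf C, p₀.1 = p.1 ∧ p.2 < p₀.2)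
      = ((board (m - 1)).filter (fun p =>
        (∃ p₀ ∈ C, p₀.2 = p.2 ∧ p₀.1 < p.1) ∧
          ¬∃ p₀ ∈ C, p₀.1 = p.1 ∧ p.2 < p₀.2)).image (fun p => (p.1 + 1, p.2)) := by
    ext ⟨c, ρ⟩
    simp only [Finset.mem_image, Finset.mem_filter, mem_board]
    constructor
    · rintro ⟨hb, ⟨p₀, hp₀, hrow, hlt⟩, hno⟩
      obtain ⟨c₀, ρ₀, hc₀, rfl⟩ := mem_shf.mp hp₀
      simp only at hrow hlt hb
      subst hrow
      have hc1 : 1 ≤ c := by omega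
      refine ⟨(c - 1, ρ₀), ⟨by first | omega | (simp only; omega), ⟨(c₀, ρ₀), hc₀, rfl, by first | omega | (simp only; omega)⟩, ?_⟩, ?_⟩
      · rintro ⟨p₀, hp₀', h1, h2⟩
        simp only at h1 h2
        refine hno ⟨(p₀.1 + 1, p₀.2), mem_shf.mpr ⟨p₀.1, p₀.2, by simpa using hp₀', rfl⟩,
          by first | omega | (simp only; omega), by simpa using h2⟩
      · simp only [Prod.mk.injEq, and_true]; omega
    · rintro ⟨⟨a, b⟩, ⟨hb, ⟨p₀, hp₀, hrow, hlt⟩, hno⟩, hEq⟩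
      simp only [Prod.mk.injEq] at hEq
      obtain ⟨rfl, rfl⟩ := hEq
      simp only at hb hrow hlt ⊢
      refine ⟨by omega, ⟨(p₀.1 + 1, p₀.2), mem_shf.mpr ⟨p₀.1, p₀.2, by simpa using hp₀, rfl⟩,
        by simpa using hrow, by first | omega | (simp only; omega)⟩, ?_⟩
      rintro ⟨x, hx, hcol, hlt2⟩
      obtain ⟨c₀, ρ₀, hc₀, rfl⟩ := mem_shf.mp hx
      simp only at hcol hlt2
      have : c₀ = a := by omega
      subst this
      exact hno ⟨(c₀, ρ₀), hc₀, rfl, hlt2⟩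
  unfold circ
  rw [hset, Finset.card_image_of_injective _ shf_map_inj]

lemma circ_insert {m : ℕ} (hm : 1 ≤ m) {C' : Finset (ℕ × ℕ)} (hC : C' ⊆ board (m - 1))
    (hcol : ∀ p ∈ C', ∀ p' ∈ C', p.1 = p'.1 → p = p')
    (hrow : ∀ p ∈ C', ∀ p' ∈ C', p.2 = p'.2 → p = p')
    {r : ℕ} (hr : r < m) (hfree : ∀ p ∈ C', p.2 ≠ r) :
    circ m (insert (0, r) (shf C')) =
      circ (m - 1) C' +
        ((Finset.range m \ C'.image Prod.snd).filter (fun x => r < x)).card := by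
  classical
  have hboard : ∀ p ∈ C', p.1 + p.2 < m - 1 := fun p hp => mem_board.mp (hC hp)
  have hmemD : ∀ p₀ : ℕ × ℕ, p₀ ∈ insert (0, r) (shf C') ↔
      p₀ = (0, r) ∨ ∃ c₀ ρ₀, (c₀, ρ₀) ∈ C' ∧ p₀ = (c₀ + 1, ρ₀) := by
    intro p₀; rw [Finset.mem_insert, mem_shf]
  set T : Finset ℕ := (Finset.Ico 1 (m - r)).filter
      (fun c => ¬∃ p₀ ∈ C', p₀.1 = c - 1 ∧ r < p₀.2) with hT
  have hmemT : ∀ c : ℕ, c ∈ T ↔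
      (1 ≤ c ∧ c < m - r) ∧ ¬∃ p₀ ∈ C', p₀.1 = c - 1 ∧ r < p₀.2 := by
    intro c; rw [hT, Finset.mem_filter, Finset.mem_Ico]
  have hset : (board m).filter (fun p =>
        (∃ p₀ ∈ insert (0, r) (shf C'), p₀.2 = p.2 ∧ p₀.1 < p.1) ∧
          ¬∃ p₀ ∈ insert (0, r) (shf C'), p₀.1 = p.1 ∧ p.2 < p₀.2)
      = ((board (m - 1)).filter (fun p =>
          (∃ p₀ ∈ C', p₀.2 = p.2 ∧ p₀.1 < p.1) ∧
            ¬∃ p₀ ∈ C', p₀.1 = p.1 ∧ p.2 < p₀.2)).image (fun p => (p.1 + 1, p.2))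
        ∪ T.image (fun c => (c, r)) := by
    ext ⟨c, ρ⟩
    simp only [Finset.mem_union, Finset.mem_image, Finset.mem_filter, mem_board, hmemD, hmemT]
    by_cases hρ : ρ = r
    · subst hρ
      constructor
      · rintro ⟨hb, ⟨p₀, hp₀, hrow2, hlt⟩, hno⟩
        right
        refine ⟨c, ⟨⟨by omega, by omega⟩, ?_⟩, rfl⟩
        rintro ⟨p₀', hp₀', hc, hlt2⟩
        exact hno ⟨(p₀'.1 + 1, p₀'.2), Or.inr ⟨p₀'.1, p₀'.2, by simpa using hp₀', rfl⟩,
          by first | omega | (simp only; omega), by simpa using hlt2⟩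
      · rintro (⟨⟨a, b⟩, ⟨hb, ⟨p₀, hp₀, hrow2, hlt⟩, hno⟩, hEq⟩ | ⟨x, ⟨⟨hx1, hx2⟩, hno⟩, hEq⟩)
        · exfalso
          simp only [Prod.mk.injEq] at hEq
          simp only at hrow2
          exact hfree p₀ hp₀ (by omega)
        · simp only [Prod.mk.injEq] at hEq
          obtain ⟨rfl, -⟩ := hEq
          refine ⟨by first | omega | (simp only; omega), ⟨(0, ρ), Or.inl rfl, rfl, by first | omega | (simp only; omega)⟩, ?_⟩
          rintro ⟨p₀, hp₀, hc, hlt2⟩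
          rcases hp₀ with rfl | ⟨c₀, ρ₀, hmem, rfl⟩
          · simp only at hc hlt2; omega
          · simp only at hc hlt2
            exact hno ⟨(c₀, ρ₀), hmem, by first | omega | (simp only; omega), by simpa using hlt2⟩
    · constructor
      · rintro ⟨hb, ⟨p₀, hp₀, hrow2, hlt⟩, hno⟩
        left
        rcases hp₀ with rfl | ⟨c₀, ρ₀, hmem, rfl⟩
        · simp only at hrow2; exact absurd hrow2.symm (by omega)
        · simp only at hrow2 hlt
          subst hrow2
          refine ⟨(c - 1, ρ₀), ⟨by first | omega | (simp only; omega),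
            ⟨(c₀, ρ₀), hmem, rfl, by first | omega | (simp only; omega)⟩, ?_⟩, by simp only [Prod.mk.injEq, and_true]; omega⟩
          rintro ⟨p₀', hp₀', hc, hlt2⟩
          simp only at hc hlt2
          exact hno ⟨(p₀'.1 + 1, p₀'.2), Or.inr ⟨p₀'.1, p₀'.2, by simpa using hp₀', rfl⟩,
            by first | omega | (simp only; omega), by simpa using hlt2⟩
      · rintro (⟨⟨a, b⟩, ⟨hb, ⟨p₀, hp₀, hrow2, hlt⟩, hno⟩, hEq⟩ | ⟨x, hxT, hEq⟩)
        · simp only [Prod.mk.injEq] at hEq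
          obtain ⟨rfl, rfl⟩ := hEq
          simp only at hb hrow2 hlt ⊢
          refine ⟨by omega, ⟨(p₀.1 + 1, p₀.2), Or.inr ⟨p₀.1, p₀.2, by simpa using hp₀, rfl⟩,
            by simpa using hrow2, by first | omega | (simp only; omega)⟩, ?_⟩
          rintro ⟨x, hx, hcol2, hlt2⟩
          rcases hx with rfl | ⟨c₀, ρ₀, hmem, rfl⟩
          · simp only at hcol2; omega
          · simp only at hcol2 hlt2
            have : c₀ = a := by omega
            subst this
            exact hno ⟨(c₀, ρ₀), hmem, rfl, hlt2⟩
        · exfalso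
          simp only [Prod.mk.injEq] at hEq
          exact hρ hEq.2.symm
  have hdisj : Disjoint
      (((board (m - 1)).filter (fun p =>
          (∃ p₀ ∈ C', p₀.2 = p.2 ∧ p₀.1 < p.1) ∧
            ¬∃ p₀ ∈ C', p₀.1 = p.1 ∧ p.2 < p₀.2)).image (fun p => (p.1 + 1, p.2)))
      (T.image (fun c => (c, r))) := by
    rw [Finset.disjoint_left]
    rintro p hp hpT
    simp only [Finset.mem_image, Finset.mem_filter] at hp hpT
    obtain ⟨⟨a, b⟩, ⟨-, ⟨p₀, hp₀, hrow2, -⟩, -⟩, hEq⟩ := hp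
    obtain ⟨x, -, hEq2⟩ := hpT
    rw [← hEq2] at hEq
    simp only [Prod.mk.injEq] at hEq
    simp only at hrow2
    exact hfree p₀ hp₀ (by omega)
  have hcirc : circ m (insert (0, r) (shf C')) = circ (m - 1) C' + T.card := by
    unfold circ
    rw [hset, Finset.card_union_of_disjoint hdisj,
      Finset.card_image_of_injective _ shf_map_inj,
      Finset.card_image_of_injective _ (fun x y h => by simpa using h)]
  rw [hcirc]
  congr 1
  -- now: T.card = ((range m \ rows).filter (r < ·)).card
  have hbad : ((Finset.Ico 1 (m - r)).filter
      (fun c => ∃ p₀ ∈ C', p₀.1 = c - 1 ∧ r < p₀.2)).card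
      = (C'.filter (fun p => r < p.2)).card := by
    symm
    apply Finset.card_bij (fun p _ => p.1 + 1)
    · rintro ⟨a, b⟩ ha
      simp only [Finset.mem_filter] at ha
      have := hboard _ ha.1
      simp only [Finset.mem_filter, Finset.mem_Ico] at *
      exact ⟨⟨by omega, by omega⟩, ⟨(a, b), ha.1, by first | omega | (simp only; omega), by simpa using ha.2⟩⟩
    · rintro ⟨a, b⟩ ha ⟨a', b'⟩ ha' h
      simp only [Finset.mem_filter] at ha ha'
      simp only at h
      exact hcol _ ha.1 _ ha'.1 (by omega)
    · intro c hc
      simp only [Finset.mem_filter, Finset.mem_Ico] at hc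
      obtain ⟨⟨hc1, hc2⟩, p₀, hp₀, hpc, hpl⟩ := hc
      exact ⟨p₀, Finset.mem_filter.mpr ⟨hp₀, hpl⟩, by omega⟩
  have hsplitT : T.card + ((Finset.Ico 1 (m - r)).filter
      (fun c => ∃ p₀ ∈ C', p₀.1 = c - 1 ∧ r < p₀.2)).card = m - r - 1 := by
    rw [hT]
    rw [add_comm, Finset.card_filter_add_card_filter_not, Nat.card_Ico]
  have hrows1 : ((C'.image Prod.snd).filter (fun x => r < x)).card
      = (C'.filter (fun p => r < p.2)).card := by
    have himg : (C'.filter (fun p => r < p.2)).image Prod.snd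
        = (C'.image Prod.snd).filter (fun x => r < x) := by
      ext x
      simp only [Finset.mem_image, Finset.mem_filter]
      constructor
      · rintro ⟨p, ⟨hp, hpl⟩, rfl⟩; exact ⟨⟨p, hp, rfl⟩, hpl⟩
      · rintro ⟨⟨p, hp, rfl⟩, hpl⟩; exact ⟨p, ⟨hp, hpl⟩, rfl⟩
    rw [← himg]
    apply Finset.card_image_of_injOn
    intro p hp p' hp' h
    simp only [Finset.mem_coe, Finset.mem_filter] at hp hp'
    exact hrow _ hp.1 _ hp'.1 h
  have hsplitF : ((Finset.range m \ C'.image Prod.snd).filter (fun x => r < x)).card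
      + ((C'.image Prod.snd).filter (fun x => r < x)).card = m - r - 1 := by
    have h1 : (Finset.range m \ C'.image Prod.snd).filter (fun x => r < x)
        = ((Finset.range m).filter (fun x => r < x)).filter
            (fun x => x ∉ C'.image Prod.snd) := by
      ext x
      simp only [Finset.mem_filter, Finset.mem_sdiff]
      tauto
    have h2 : (C'.image Prod.snd).filter (fun x => r < x)
        = ((Finset.range m).filter (fun x => r < x)).filter
            (fun x => x ∈ C'.image Prod.snd) := by
      ext x
      simp only [Finset.mem_filter, Finset.mem_image, Finset.mem_range]
      constructor
      · rintro ⟨⟨p, hp, rfl⟩, hl⟩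
        have := hboard _ hp
        exact ⟨⟨by omega, hl⟩, ⟨p, hp, rfl⟩⟩
      · rintro ⟨⟨hx, hl⟩, hmem⟩
        exact ⟨hmem, hl⟩
    rw [h1, h2, add_comm]
    rw [Finset.card_filter_add_card_filter_not]
    have : (Finset.range m).filter (fun x => r < x) = Finset.Ico (r + 1) m := by
      ext x; simp only [Finset.mem_filter, Finset.mem_range, Finset.mem_Ico]; omega
    rw [this, Nat.card_Ico]
    omega
  omega

lemma mem_unshf {C : Finset (ℕ × ℕ)} {p : ℕ × ℕ} :
    p ∈ unshf C ↔ ∃ a b, (a, b) ∈ C ∧ p = (a - 1, b) := by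
  simp only [unshf, Finset.mem_image]
  constructor
  · rintro ⟨⟨a, b⟩, h, rfl⟩
    exact ⟨a, b, h, rfl⟩
  · rintro ⟨a, b, h, rfl⟩
    exact ⟨(a, b), h, rfl⟩

lemma unshf_mem_configs {m n : ℕ} {C : Finset (ℕ × ℕ)} (hC : C ∈ configs m n)
    (h1 : ∀ p ∈ C, p.1 ≠ 0) : unshf C ∈ configs (m - 1) n := by
  rw [mem_configs] at hC ⊢
  obtain ⟨hsub, hcard, hcol, hrow⟩ := hC
  refine ⟨?_, ?_, ?_, ?_⟩
  · intro p hp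
    obtain ⟨a, b, hab, rfl⟩ := mem_unshf.mp hp
    have h2 := mem_board.mp (hsub hab)
    have h3 := h1 _ hab
    rw [mem_board]
    simp only at h2 h3 ⊢
    omega
  · rw [card_unshf (fun p hp => by have := h1 p hp; omega), hcard]
  · intro p hp p' hp' hEq
    obtain ⟨a, b, hab, rfl⟩ := mem_unshf.mp hp
    obtain ⟨a', b', hab', rfl⟩ := mem_unshf.mp hp'
    have h1a := h1 _ hab
    have h1a' := h1 _ hab'
    simp only at hEq h1a h1a'
    have ha : a = a' := by omega
    have := hcol _ hab _ hab' (by simpa using ha)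
    simp only [Prod.mk.injEq] at this ⊢
    omega
  · intro p hp p' hp' hEq
    obtain ⟨a, b, hab, rfl⟩ := mem_unshf.mp hp
    obtain ⟨a', b', hab', rfl⟩ := mem_unshf.mp hp'
    simp only at hEq
    have := hrow _ hab _ hab' (by simpa using hEq)
    simp only [Prod.mk.injEq] at this ⊢
    omega

lemma erase_mem_configs {m n : ℕ} {C : Finset (ℕ × ℕ)} (hC : C ∈ configs m n)
    {p : ℕ × ℕ} (hp : p ∈ C) : C.erase p ∈ configs m (n - 1) := by
  rw [mem_configs] at hC ⊢
  obtain ⟨hsub, hcard, hcol, hrow⟩ := hC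
  refine ⟨fun x hx => hsub (Finset.mem_of_mem_erase hx), ?_,
    fun x hx x' hx' h => hcol _ (Finset.mem_of_mem_erase hx) _ (Finset.mem_of_mem_erase hx') h,
    fun x hx x' hx' h => hrow _ (Finset.mem_of_mem_erase hx) _ (Finset.mem_of_mem_erase hx') h⟩
  rw [Finset.card_erase_of_mem hp, hcard]

lemma insert_mem_configs {m n : ℕ} (hn : 1 ≤ n) {C' : Finset (ℕ × ℕ)}
    (hC : C' ∈ configs (m - 1) (n - 1)) {r : ℕ} (hr : r < m)
    (hfree : ∀ p ∈ C', p.2 ≠ r) : insert (0, r) (shf C') ∈ configs m n := by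
  rw [mem_configs] at hC ⊢
  obtain ⟨hsub, hcard, hcol, hrow⟩ := hC
  have hnotmem : (0, r) ∉ shf C' := by
    rw [mem_shf]
    rintro ⟨c, ρ, -, h⟩
    simp only [Prod.mk.injEq] at h
    omega
  refine ⟨?_, ?_, ?_, ?_⟩
  · intro p hp
    rcases Finset.mem_insert.mp hp with rfl | hp'
    · rw [mem_board]; simpa using hr
    · obtain ⟨a, b, hab, rfl⟩ := mem_shf.mp hp'
      have := mem_board.mp (hsub hab)
      rw [mem_board]
      simp only at this ⊢
      omega
  · rw [Finset.card_insert_of_notMem hnotmem, card_shf, hcard]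
    omega
  · intro p hp p' hp' hEq
    rcases Finset.mem_insert.mp hp with rfl | hp2 <;>
      rcases Finset.mem_insert.mp hp' with rfl | hp2'
    · rfl
    · obtain ⟨a, b, hab, rfl⟩ := mem_shf.mp hp2'
      simp only at hEq
      omega
    · obtain ⟨a, b, hab, rfl⟩ := mem_shf.mp hp2
      simp only at hEq
      omega
    · obtain ⟨a, b, hab, rfl⟩ := mem_shf.mp hp2
      obtain ⟨a', b', hab', rfl⟩ := mem_shf.mp hp2'
      simp only at hEq
      have := hcol _ hab _ hab' (by simp only; omega)
      simp only [Prod.mk.injEq] at this ⊢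
      omega
  · intro p hp p' hp' hEq
    rcases Finset.mem_insert.mp hp with rfl | hp2 <;>
      rcases Finset.mem_insert.mp hp' with rfl | hp2'
    · rfl
    · obtain ⟨a, b, hab, rfl⟩ := mem_shf.mp hp2'
      simp only at hEq
      exact absurd (by omega) (hfree _ hab)
    · obtain ⟨a, b, hab, rfl⟩ := mem_shf.mp hp2
      simp only at hEq
      exact absurd (by omega) (hfree _ hab)
    · obtain ⟨a, b, hab, rfl⟩ := mem_shf.mp hp2
      obtain ⟨a', b', hab', rfl⟩ := mem_shf.mp hp2'
      simp only at hEq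
      have := hrow _ hab _ hab' (by simp only; omega)
      simp only [Prod.mk.injEq] at this ⊢
      omega

lemma filter_col_zero {C : Finset (ℕ × ℕ)} {r : ℕ}
    (hcol : ∀ p ∈ C, ∀ p' ∈ C, p.1 = p'.1 → p = p') (hmem : (0, r) ∈ C) :
    C.filter (fun p => p.1 = 0) = {(0, r)} := by
  ext p
  simp only [Finset.mem_filter, Finset.mem_singleton]
  constructor
  · rintro ⟨hp, h0⟩
    exact hcol _ hp _ hmem (by simpa using h0)
  · rintro rfl
    exact ⟨hmem, rfl⟩

lemma filter_col_ne_zero {C : Finset (ℕ × ℕ)} {r : ℕ}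
    (hcol : ∀ p ∈ C, ∀ p' ∈ C, p.1 = p'.1 → p = p') (hmem : (0, r) ∈ C) :
    C.filter (fun p => p.1 ≠ 0) = C.erase (0, r) := by
  ext p
  simp only [Finset.mem_filter, Finset.mem_erase]
  constructor
  · rintro ⟨hp, h0⟩
    refine ⟨?_, hp⟩
    rintro rfl
    exact h0 rfl
  · rintro ⟨hne, hp⟩
    refine ⟨hp, fun h0 => hne ?_⟩
    exact hcol _ hp _ hmem (by simpa using h0)

lemma sum_pow_count (q : ℝ) (s : Finset ℕ) :
    ∑ r ∈ s, q ^ (s.filter (fun x => r < x)).card = ∑ j ∈ Finset.range s.card, q ^ j := by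
  suffices H : ∀ k (s : Finset ℕ), s.card = k →
      ∑ r ∈ s, q ^ (s.filter (fun x => r < x)).card = ∑ j ∈ Finset.range k, q ^ j by
    exact H s.card s rfl
  intro k
  induction k with
  | zero =>
    intro s hn
    rw [Finset.card_eq_zero.mp hn]
    simp
  | succ k ih =>
    intro s hn
    have hne : s.Nonempty := Finset.card_pos.mp (by omega)
    set r0 := s.min' hne with hr0
    have hr0m : r0 ∈ s := s.min'_mem hne
    have h1 : s.filter (fun x => r0 < x) = s.erase r0 := by
      ext x
      simp only [Finset.mem_filter, Finset.mem_erase]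
      constructor
      · rintro ⟨hx, hlt⟩; exact ⟨by omega, hx⟩
      · rintro ⟨hne2, hx⟩
        exact ⟨hx, lt_of_le_of_ne (s.min'_le x hx) (Ne.symm hne2)⟩
    have hcard : (s.erase r0).card = k := by
      rw [Finset.card_erase_of_mem hr0m, hn]
      omega
    have h2 : ∀ r ∈ s.erase r0,
        s.filter (fun x => r < x) = (s.erase r0).filter (fun x => r < x) := by
      intro r hrm
      ext x
      simp only [Finset.mem_filter, Finset.mem_erase]
      constructor
      · rintro ⟨hx, hlt⟩
        refine ⟨⟨?_, hx⟩, hlt⟩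
        rintro rfl
        have := s.min'_le r (Finset.mem_of_mem_erase hrm)
        have := Finset.mem_erase.mp hrm
        omega
      · rintro ⟨⟨-, hx⟩, hlt⟩; exact ⟨hx, hlt⟩
    rw [← Finset.sum_erase_add s _ hr0m, h1, hcard, Finset.sum_range_succ]
    congr 1
    rw [← ih _ hcard]
    exact Finset.sum_congr rfl (fun r hrm => by rw [h2 r hrm])

lemma qAnalogue_eq_sum {q : ℝ} (hq1 : q ≠ 1) (k : ℕ) :
    qAnalogue q k = ∑ j ∈ Finset.range k, q ^ j := by
  rw [geom_sum_eq hq1, qAnalogue, div_eq_div_iff (sub_ne_zero_of_ne (Ne.symm hq1))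
    (sub_ne_zero_of_ne hq1)]
  ring

lemma shf_mem_configs {m n : ℕ} {C' : Finset (ℕ × ℕ)} (hC : C' ∈ configs (m - 1) n) :
    shf C' ∈ configs m n := by
  rw [mem_configs] at hC ⊢
  obtain ⟨hsub, hcard, hcol, hrow⟩ := hC
  refine ⟨?_, by rw [card_shf, hcard], ?_, ?_⟩
  · intro p hp
    obtain ⟨a, b, hab, rfl⟩ := mem_shf.mp hp
    have := mem_board.mp (hsub hab)
    rw [mem_board]
    simp only at this ⊢
    omega
  · intro p hp p' hp' hEq
    obtain ⟨a, b, hab, rfl⟩ := mem_shf.mp hp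
    obtain ⟨a', b', hab', rfl⟩ := mem_shf.mp hp'
    simp only at hEq
    have := hcol _ hab _ hab' (by first | omega | (simp only; omega))
    simp only [Prod.mk.injEq] at this ⊢
    omega
  · intro p hp p' hp' hEq
    obtain ⟨a, b, hab, rfl⟩ := mem_shf.mp hp
    obtain ⟨a', b', hab', rfl⟩ := mem_shf.mp hp'
    simp only at hEq
    have := hrow _ hab _ hab' (by first | omega | (simp only; omega))
    simp only [Prod.mk.injEq] at this ⊢
    omega

def rowOf (C : Finset (ℕ × ℕ)) : ℕ := (C.filter (fun p => p.1 = 0)).sum Prod.snd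

lemma rowOf_eq {C : Finset (ℕ × ℕ)} {r : ℕ}
    (hcol : ∀ p ∈ C, ∀ p' ∈ C, p.1 = p'.1 → p = p') (hmem : (0, r) ∈ C) :
    rowOf C = r := by
  rw [rowOf, filter_col_zero hcol hmem, Finset.sum_singleton]

/-- The recursion for the circ-generating function of rook configurations on staircase
boards: `Σ_{C ∈ C_n(S_{m+1})} q^{circ_m(C)} = Σ_{C ∈ C_n(S_m)} q^{circ_{m-1}(C)}
+ [m-n+1]_q Σ_{C ∈ C_{n-1}(S_m)} q^{circ_{m-1}(C)}`. -/
theorem sum_q_circ_recursion (m n : ℕ) (hn : 1 ≤ n) (hm : n ≤ m) (q : ℝ)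
    (hq0 : 0 < q) (hq1 : q ≠ 1) :
    ∑ C ∈ configs m n, q ^ circ m C =
      (∑ C ∈ configs (m - 1) n, q ^ circ (m - 1) C) +
        qAnalogue q (m - n + 1) * ∑ C ∈ configs (m - 1) (n - 1), q ^ circ (m - 1) C := by
  classical
  have hm1 : 1 ≤ m := le_trans hn hm
  -- Part A: configurations with no rook in column 0
  have hA : ∑ C ∈ (configs m n).filter (fun C => ∀ p ∈ C, p.1 ≠ 0), q ^ circ m C
      = ∑ C ∈ configs (m - 1) n, q ^ circ (m - 1) C := by
    apply Finset.sum_nbij' (i := fun C => unshf C) (j := fun C => shf C)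
    · intro C hC
      rw [Finset.mem_filter] at hC
      exact unshf_mem_configs hC.1 hC.2
    · intro C' hC'
      rw [Finset.mem_filter]
      refine ⟨shf_mem_configs hC', ?_⟩
      intro p hp
      obtain ⟨a, b, -, rfl⟩ := mem_shf.mp hp
      simp
    · intro C hC
      rw [Finset.mem_filter] at hC
      exact shf_unshf (fun p hp => by have := hC.2 p hp; omega)
    · intro C' _
      exact unshf_shf C'
    · intro C hC
      rw [Finset.mem_filter] at hC
      have h2 := shf_unshf (fun p hp => (by have := hC.2 p hp; omega : 1 ≤ p.1))
      have h3 := circ_shf hm1 (mem_configs.mp (unshf_mem_configs hC.1 hC.2)).1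
      rw [← h3, h2]
  -- Part B: configurations with a rook in column 0
  set S : Finset (Finset (ℕ × ℕ) × ℕ) :=
    ((configs (m - 1) (n - 1)) ×ˢ Finset.range m).filter
      (fun x => ∀ p ∈ x.1, p.2 ≠ x.2) with hS
  have hmemS : ∀ x : Finset (ℕ × ℕ) × ℕ, x ∈ S ↔
      x.1 ∈ configs (m - 1) (n - 1) ∧ x.2 < m ∧ ∀ p ∈ x.1, p.2 ≠ x.2 := by
    intro x
    rw [hS, Finset.mem_filter, Finset.mem_product, Finset.mem_range, and_assoc]
  have hB : ∑ C ∈ (configs m n).filter (fun C => ¬∀ p ∈ C, p.1 ≠ 0), q ^ circ m C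
      = ∑ x ∈ S, q ^ circ m (insert (0, x.2) (shf x.1)) := by
    apply Finset.sum_nbij'
      (i := fun C => (unshf (C.filter (fun p => p.1 ≠ 0)), rowOf C))
      (j := fun x => insert (0, x.2) (shf x.1))
    · intro C hC
      rw [Finset.mem_filter] at hC
      obtain ⟨hCm, hC0⟩ := hC
      obtain ⟨hsub, hcard, hcol, hrow⟩ := mem_configs.mp hCm
      push_neg at hC0
      obtain ⟨p, hpC, hp0⟩ := hC0
      have hmem : (0, p.2) ∈ C := by
        have hp' : p = (0, p.2) := by
          rw [Prod.ext_iff]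
          exact ⟨hp0, rfl⟩
        rwa [← hp']
      set r := p.2
      have hrowOf : rowOf C = r := rowOf_eq hcol hmem
      have hfne : C.filter (fun p => p.1 ≠ 0) = C.erase (0, r) :=
        filter_col_ne_zero hcol hmem
      have hecols : ∀ x ∈ C.erase (0, r), x.1 ≠ 0 := by
        intro x hx h0
        have hxC := Finset.mem_of_mem_erase hx
        have := hcol _ hxC _ hmem (by simpa using h0)
        exact (Finset.mem_erase.mp hx).1 this
      rw [hmemS]
      refine ⟨?_, ?_, ?_⟩
      · simp only [hfne]
        exact unshf_mem_configs (erase_mem_configs hCm hmem) hecols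
      · simp only [hrowOf]
        have := mem_board.mp (hsub hmem)
        simp only at this
        omega
      · simp only [hfne, hrowOf]
        intro x hx
        obtain ⟨a, b, hab, rfl⟩ := mem_unshf.mp hx
        simp only
        intro hbr
        have habC := Finset.mem_of_mem_erase hab
        have := hrow _ habC _ hmem (by simpa using hbr)
        exact (Finset.mem_erase.mp hab).1 this
    · intro x hx
      rw [hmemS] at hx
      obtain ⟨hC', hxr, hfree⟩ := hx
      rw [Finset.mem_filter]
      refine ⟨insert_mem_configs hn hC' hxr hfree, ?_⟩
      intro hall
      exact hall (0, x.2) (Finset.mem_insert_self _ _) rfl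
    · intro C hC
      rw [Finset.mem_filter] at hC
      obtain ⟨hCm, hC0⟩ := hC
      obtain ⟨hsub, hcard, hcol, hrow⟩ := mem_configs.mp hCm
      push_neg at hC0
      obtain ⟨p, hpC, hp0⟩ := hC0
      have hmem : (0, p.2) ∈ C := by
        have hp' : p = (0, p.2) := by
          rw [Prod.ext_iff]
          exact ⟨hp0, rfl⟩
        rwa [← hp']
      have hrowOf : rowOf C = p.2 := rowOf_eq hcol hmem
      have hfne : C.filter (fun p => p.1 ≠ 0) = C.erase (0, p.2) :=
        filter_col_ne_zero hcol hmem
      have hecols : ∀ x ∈ C.erase (0, p.2), 1 ≤ x.1 := by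
        intro x hx
        have hxC := Finset.mem_of_mem_erase hx
        by_contra h0
        have := hcol _ hxC _ hmem (by simp only; omega)
        exact (Finset.mem_erase.mp hx).1 this
      simp only [hfne, hrowOf]
      rw [shf_unshf hecols, Finset.insert_erase hmem]
    · intro x hx
      rw [hmemS] at hx
      obtain ⟨hC', hxr, hfree⟩ := hx
      obtain ⟨hsub', hcard', hcol', hrow'⟩ := mem_configs.mp hC'
      have hnotmem : (0, x.2) ∉ shf x.1 := by
        rw [mem_shf]
        rintro ⟨c, ρ, -, h⟩
        simp only [Prod.mk.injEq] at h
        omega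
      have hinsC := insert_mem_configs hn hC' hxr hfree
      obtain ⟨hsub2, hcard2, hcol2, hrow2⟩ := mem_configs.mp hinsC
      have hmem2 : (0, x.2) ∈ insert (0, x.2) (shf x.1) := Finset.mem_insert_self _ _
      have h1 : (insert (0, x.2) (shf x.1)).filter (fun p => p.1 ≠ 0) = shf x.1 := by
        rw [filter_col_ne_zero hcol2 hmem2, Finset.erase_insert hnotmem]
      have h2 : rowOf (insert (0, x.2) (shf x.1)) = x.2 := rowOf_eq hcol2 hmem2
      rw [h1, h2, unshf_shf]
    · intro C hC
      rw [Finset.mem_filter] at hC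
      obtain ⟨hCm, hC0⟩ := hC
      obtain ⟨hsub, hcard, hcol, hrow⟩ := mem_configs.mp hCm
      push_neg at hC0
      obtain ⟨p, hpC, hp0⟩ := hC0
      have hmem : (0, p.2) ∈ C := by
        have hp' : p = (0, p.2) := by
          rw [Prod.ext_iff]
          exact ⟨hp0, rfl⟩
        rwa [← hp']
      have hrowOf : rowOf C = p.2 := rowOf_eq hcol hmem
      have hfne : C.filter (fun p => p.1 ≠ 0) = C.erase (0, p.2) :=
        filter_col_ne_zero hcol hmem
      have hecols : ∀ x ∈ C.erase (0, p.2), 1 ≤ x.1 := by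
        intro x hx
        have hxC := Finset.mem_of_mem_erase hx
        by_contra h0
        have := hcol _ hxC _ hmem (by simp only; omega)
        exact (Finset.mem_erase.mp hx).1 this
      simp only [hfne, hrowOf]
      rw [shf_unshf hecols, Finset.insert_erase hmem]
  -- rewrite each term of the S-sum using circ_insert
  have hB2 : ∑ x ∈ S, q ^ circ m (insert (0, x.2) (shf x.1))
      = ∑ x ∈ S, q ^ circ (m - 1) x.1 *
          q ^ ((Finset.range m \ x.1.image Prod.snd).filter (fun y => x.2 < y)).card := by
    apply Finset.sum_congr rfl
    intro x hx
    rw [hmemS] at hx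
    obtain ⟨hC', hxr, hfree⟩ := hx
    obtain ⟨hsub', hcard', hcol', hrow'⟩ := mem_configs.mp hC'
    rw [circ_insert hm1 hsub' hcol' hrow' hxr hfree, pow_add]
  -- evaluate the r-sum for each fixed C'
  have hB3 : ∀ C' ∈ configs (m - 1) (n - 1),
      ∑ r ∈ (Finset.range m).filter (fun r => ∀ p ∈ C', p.2 ≠ r),
        q ^ circ (m - 1) C' *
          q ^ ((Finset.range m \ C'.image Prod.snd).filter (fun y => r < y)).card
      = q ^ circ (m - 1) C' * qAnalogue q (m - n + 1) := by
    intro C' hC'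
    obtain ⟨hsub', hcard', hcol', hrow'⟩ := mem_configs.mp hC'
    have hFeq : (Finset.range m).filter (fun r => ∀ p ∈ C', p.2 ≠ r)
        = Finset.range m \ C'.image Prod.snd := by
      ext x
      simp only [Finset.mem_filter, Finset.mem_sdiff, Finset.mem_range, Finset.mem_image]
      constructor
      · rintro ⟨hx, hall⟩
        refine ⟨hx, ?_⟩
        rintro ⟨p, hp, rfl⟩
        exact hall p hp rfl
      · rintro ⟨hx, hno⟩
        exact ⟨hx, fun p hp h => hno ⟨p, hp, h⟩⟩
    have hsubr : C'.image Prod.snd ⊆ Finset.range m := by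
      intro x hx
      obtain ⟨p, hp, rfl⟩ := Finset.mem_image.mp hx
      have := mem_board.mp (hsub' hp)
      rw [Finset.mem_range]
      omega
    have hcardF : (Finset.range m \ C'.image Prod.snd).card = m - n + 1 := by
      rw [Finset.card_sdiff_of_subset hsubr, Finset.card_range,
        Finset.card_image_of_injOn (fun p hp p' hp' h => hrow' _ hp _ hp' h), hcard']
      omega
    rw [hFeq, ← Finset.mul_sum]
    congr 1
    rw [sum_pow_count q _, hcardF, qAnalogue_eq_sum hq1]
  -- assemble
  rw [← Finset.sum_filter_add_sum_filter_not (configs m n) (fun C => ∀ p ∈ C, p.1 ≠ 0),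
    hA, hB, hB2, hS, Finset.sum_filter, Finset.sum_product]
  congr 1
  rw [Finset.mul_sum]
  apply Finset.sum_congr rfl
  intro C' hC'
  rw [← Finset.sum_filter, hB3 C' hC', mul_comm]
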